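/- Let N be a squarefree integer with at least two distinct prime divisors, and let e : (ℤ/Nℤ)/±1 → ℤ be a function satisfying the orbit condition: ∑_{h ∈ O_{a,p}} e(h) = 0 for every prime p dividing N and every a ∈ ℤ/Nℤ. Then for every integer g with d := gcd(g,N) < N, one has e([g]) = μ(d) · ∑_{[h]} e([h]), where the sum ranges over the classes [h] ∈ (ℤ/Nℤ)/±1 with gcd(h,N) = 1 and h ≡ ±g (mod N/d), each such class counted once, and μ is the Möbius function. -/

import Mathlib

open scoped Classical

/-- The setoid on `ℤ/Mℤ` identifying `x` with `−x`. -/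
def negSetoid (M : ℕ) : Setoid (ZMod M) where
  r x y := x = y ∨ x = -y
  iseqv := by
    constructor
    · intro x; exact Or.inl rfl
    · rintro x y (rfl | rfl)
      · exact Or.inl rfl
      · exact Or.inr (neg_neg _).symm
    · rintro x y z (rfl | rfl) (rfl | rfl)
      · exact Or.inl rfl
      · exact Or.inr rfl
      · exact Or.inr rfl
      · exact Or.inl (neg_neg _)

/-- The quotient `(ℤ/Mℤ)/±1` of `ℤ/Mℤ` by the involution `x ↦ −x`. -/
abbrev ZModPM (M : ℕ) : Type := Quotient (negSetoid M)

/-- The class `[x] ∈ (ℤ/Mℤ)/±1` of `x ∈ ℤ/Mℤ`. -/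
def mkPM (M : ℕ) (x : ZMod M) : ZModPM M := Quotient.mk (negSetoid M) x

/-- For `a ∈ ℤ/Mℤ` and a divisor `K` of `M`, the orbit `O_{a,K}`: the image in
`(ℤ/Mℤ)/±1` of the set `{a + k·M/K : k = 0, 1, …, K−1}`. -/
noncomputable def orbitPM (M : ℕ) (a : ZMod M) (K : ℕ) : Finset (ZModPM M) :=
  (Finset.range K).image (fun k => mkPM M (a + (k : ZMod M) * ((M / K : ℕ) : ZMod M)))

/-
Induction on `d = gcd(g, N)`; for `d = 1` the sum is the single term `e([g])`. Otherwise write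
`d = p c` with `p` prime and `m = N / d`, so that `N = p c m`. The orbit `O_{g,p}` consists of
the classes `[g + k c m]`, `k < p`, and for `0 < k < p` we have `gcd(g + k c m, N) = c`, so by
induction `e([g + k c m])` is `μ(c)` times the sum of `e` over the unit classes lying over
`[g + k c m]` modulo `p m`. Reduction modulo `p m` is injective on `O_{g,p}`, no unit class lies
over `[g]` itself, and every unit class lying over `[g]` modulo `m` lies over some member of the
orbit (solve `h ≡ g + k c m (mod p)`). The orbit relation `e([g]) = -∑_{O_{g,p} ∖ [g]} e` and
`μ(p c) = -μ(c)` then give the formula.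
-/

open Finset ArithmeticFunction
open scoped ArithmeticFunction.Moebius

lemma mkPM_eq_mkPM_iff {M : ℕ} {a b : ZMod M} : mkPM M a = mkPM M b ↔ a = b ∨ a = -b :=
  Quotient.eq

lemma mkPM_intCast_eq_mkPM_iff {M : ℕ} {a b : ℤ} :
    mkPM M a = mkPM M b ↔ a ≡ b [ZMOD M] ∨ a ≡ -b [ZMOD M] := by
  rw [mkPM_eq_mkPM_iff, ← Int.cast_neg, ZMod.intCast_eq_intCast_iff, ZMod.intCast_eq_intCast_iff]

lemma mkPM_neg {M : ℕ} (a : ZMod M) : mkPM M (-a) = mkPM M a :=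
  mkPM_eq_mkPM_iff.2 (Or.inr rfl)

lemma mem_orbitPM_intCast {N p M : ℕ} [NeZero N] (hN : p * M = N) {g : ℤ} {cl : ZModPM N} :
    cl ∈ orbitPM N g p ↔ ∃ k < p, mkPM N ((g + k * M : ℤ) : ZMod N) = cl := by
  have hp : 0 < p := Nat.pos_of_ne_zero fun hp => NeZero.ne N (by simp [← hN, hp])
  simp [orbitPM, ← hN, Nat.mul_div_cancel_left M hp]

def castPM {N n : ℕ} (hn : n ∣ N) : ZModPM N → ZModPM n :=
  Quotient.map (ZMod.castHom hn (ZMod n)) fun _ _ h =>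
    h.imp (congrArg _) fun h => by rw [h, map_neg]

@[simp]
lemma castPM_mkPM_intCast {N n : ℕ} (hn : n ∣ N) (a : ℤ) : castPM hn (mkPM N a) = mkPM n a := by
  change mkPM n (ZMod.castHom hn _ a) = _
  rw [map_intCast]

lemma castPM_castPM {N n n' : ℕ} (hn : n ∣ N) (hn' : n' ∣ n) (cl : ZModPM N) :
    castPM hn' (castPM hn cl) = castPM (hn'.trans hn) cl := by
  induction cl using Quotient.inductionOn
  change mkPM n' (ZMod.castHom hn' _ (ZMod.castHom hn _ _)) = mkPM n' (ZMod.castHom _ _ _)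
  rw [← RingHom.comp_apply, ZMod.castHom_comp]

lemma castPM_self {N : ℕ} (cl : ZModPM N) : castPM dvd_rfl cl = cl := by
  induction cl using Quotient.inductionOn
  change mkPM _ _ = mkPM _ _
  simp

lemma Int.gcd_natCast_mul_of_coprime (x : ℤ) {a b : ℕ} (h : a.Coprime b) :
    Int.gcd x (a * b : ℕ) = Int.gcd x a * Int.gcd x b :=
  Nat.Coprime.gcd_mul _ h

lemma Int.gcd_natCast_prime_of_not_dvd {p : ℕ} (hp : p.Prime) {x : ℤ} (hpx : ¬ (p : ℤ) ∣ x) :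
    Int.gcd x p = 1 :=
  Nat.Coprime.symm ((Nat.Prime.coprime_iff_not_dvd hp).2 (by rwa [← Int.natCast_dvd]))

lemma Int.gcd_add_mul_mul_prime {p M : ℕ} (hp : p.Prime) (hpM : p.Coprime M) {g k : ℤ}
    (hpg : (p : ℤ) ∣ g) (hpk : ¬ (p : ℤ) ∣ k) :
    Int.gcd (g + k * M) (p * M : ℕ) * p = Int.gcd g (p * M : ℕ) := by
  have hpM' : ¬ (p : ℤ) ∣ M := Int.natCast_dvd_natCast.not.2 (hp.coprime_iff_not_dvd.1 hpM)
  have hp_shift : ¬ (p : ℤ) ∣ g + k * M := fun h =>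
    ((Nat.prime_iff_prime_int.1 hp).dvd_mul.1 ((dvd_add_right hpg).1 h)).elim hpk hpM'
  have hgp : Int.gcd g p = p := by exact_mod_cast Int.gcd_eq_right (Int.natCast_nonneg p) hpg
  rw [Int.gcd_natCast_mul_of_coprime _ hpM, Int.gcd_natCast_mul_of_coprime _ hpM,
    Int.gcd_natCast_prime_of_not_dvd hp hp_shift, Int.gcd_add_mul_right_left, hgp]
  ring

lemma Int.exists_lt_modEq_add_mul {p M : ℕ} (hp : p.Prime) (hpM : p.Coprime M) (a b : ℤ) :
    ∃ k < p, a ≡ b + k * M [ZMOD p] := by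
  have := Fact.mk hp
  have hM : (M : ZMod p) ≠ 0 := by
    rw [Ne, ZMod.natCast_eq_zero_iff]
    exact hp.coprime_iff_not_dvd.1 hpM
  refine ⟨((a - b : ZMod p) * (M : ZMod p)⁻¹).val, ZMod.val_lt _, ?_⟩
  rw [← ZMod.intCast_eq_intCast_iff]
  push_cast
  rw [ZMod.natCast_val, ZMod.cast_id, inv_mul_cancel_right₀ hM]
  ring

lemma Int.add_mul_modEq_of_dvd {a b : ℕ} (hab : a ∣ b) (g k : ℤ) : g + k * b ≡ g [ZMOD a] := by
  rw [Int.modEq_iff_dvd, sub_add_cancel_left, dvd_neg]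
  exact (Int.natCast_dvd_natCast.2 hab).mul_left k

lemma Int.ModEq.mul_of_isCoprime {a b x y : ℤ} (hab : IsCoprime a b) (ha : x ≡ y [ZMOD a])
    (hb : x ≡ y [ZMOD b]) : x ≡ y [ZMOD a * b] := by
  rw [Int.modEq_iff_dvd] at *
  exact hab.mul_dvd ha hb

lemma Int.modEq_neg_of_modEq_of_modEq_neg {p c m x y : ℤ} (hcm : IsCoprime c m)
    (hp : IsCoprime p (c * m)) (hxy : x ≡ y [ZMOD c * m]) (hcy : c ∣ y)
    (h : x ≡ -y [ZMOD p * m]) : x ≡ -y [ZMOD p * (c * m)] := by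
  rw [Int.modEq_iff_dvd] at hxy h ⊢
  have hm_two : m ∣ 2 * y := by
    have := dvd_sub ((Dvd.intro_left c rfl).trans hxy) ((Dvd.intro_left p rfl).trans h)
    rwa [show y - x - (-y - x) = 2 * y by ring] at this
  -- `c ∣ y` and `m ∣ 2 y` upgrade `x ≡ y (mod c m)` to `x ≡ -y (mod c m)`
  have hcm_sum : c * m ∣ -y - x := by
    have := dvd_sub hxy (hcm.mul_dvd (hcy.mul_left 2) hm_two)
    rwa [show y - x - 2 * y = -y - x by ring] at this
  exact hp.mul_dvd ((Dvd.intro m rfl).trans h) hcm_sum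

section UnitFiber

variable {N : ℕ} [NeZero N]

noncomputable def unitFiber {n : ℕ} (hn : n ∣ N) (x : ZModPM n) : Finset (ZModPM N) :=
  univ.filter fun cl => (∃ h : ℤ, mkPM N h = cl ∧ Int.gcd h N = 1) ∧ castPM hn cl = x

lemma filter_eq_unitFiber {n : ℕ} (hn : n ∣ N) (g : ℤ) :
    univ.filter (fun cl : ZModPM N => ∃ h : ℤ, mkPM N (h : ZMod N) = cl ∧ Int.gcd h N = 1 ∧
      ((h : ZMod n) = (g : ZMod n) ∨ (h : ZMod n) = -(g : ZMod n))) =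
      unitFiber hn (mkPM n g) := by
  ext cl
  simp only [unitFiber, mem_filter, mem_univ, true_and]
  constructor
  · rintro ⟨h, rfl, hh, hhg⟩
    exact ⟨⟨h, rfl, hh⟩, by rw [castPM_mkPM_intCast]; exact mkPM_eq_mkPM_iff.2 hhg⟩
  · rintro ⟨⟨h, rfl, hh⟩, hhg⟩
    rw [castPM_mkPM_intCast] at hhg
    exact ⟨h, rfl, hh, mkPM_eq_mkPM_iff.1 hhg⟩

lemma unitFiber_self {g : ℤ} (hg : Int.gcd g N = 1) :
    unitFiber dvd_rfl (mkPM N g) = {mkPM N g} := by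
  ext cl
  simp only [unitFiber, castPM_self, mem_filter, mem_univ, true_and, mem_singleton]
  exact ⟨And.right, fun h => ⟨⟨g, h.symm, hg⟩, h⟩⟩

lemma disjoint_unitFiber {n : ℕ} (hn : n ∣ N) {x y : ZModPM n} (hxy : x ≠ y) :
    Disjoint (unitFiber hn x) (unitFiber hn y) := by
  rw [disjoint_left]
  intro cl hx hy
  simp only [unitFiber, mem_filter] at hx hy
  exact hxy (hx.2.2.symm.trans hy.2.2)

lemma unitFiber_mkPM_eq_empty {n q : ℕ} (hn : n ∣ N) (hqn : q ∣ n) (hq : q ≠ 1) {g : ℤ}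
    (hqg : (q : ℤ) ∣ g) : unitFiber hn (mkPM n g) = ∅ := by
  refine eq_empty_of_forall_notMem fun cl hcl => hq ?_
  simp only [unitFiber, mem_filter, mem_univ, true_and] at hcl
  obtain ⟨⟨h, rfl, hh⟩, hhg⟩ := hcl
  rw [castPM_mkPM_intCast, mkPM_intCast_eq_mkPM_iff] at hhg
  have hg0 : g ≡ 0 [ZMOD q] := Int.modEq_zero_iff_dvd.2 hqg
  have hh0 : h ≡ 0 [ZMOD q] := by
    rcases hhg with hhg | hhg
    · exact (hhg.of_dvd (Int.natCast_dvd_natCast.2 hqn)).trans hg0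
    · simpa using (hhg.of_dvd (Int.natCast_dvd_natCast.2 hqn)).trans hg0.neg
  have hqN : (q : ℤ) ∣ N := Int.natCast_dvd_natCast.2 (hqn.trans hn)
  have := Int.dvd_coe_gcd (Int.modEq_zero_iff_dvd.1 hh0) hqN
  rw [hh] at this
  exact Nat.dvd_one.1 (Int.natCast_dvd_natCast.1 this)

end UnitFiber

section OrbitStep

variable {N : ℕ} [NeZero N] {p c m : ℕ}

lemma injOn_castPM_orbitPM (hN : p * (c * m) = N) (hpm : p * m ∣ N) (hcm : c.Coprime m)
    (hpcm : p.Coprime (c * m)) {g : ℤ} (hcg : (c : ℤ) ∣ g) :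
    Set.InjOn (castPM hpm) (orbitPM N g p : Set (ZModPM N)) := by
  rintro _ h₁ _ h₂ heq
  obtain ⟨k₁, -, rfl⟩ := (mem_orbitPM_intCast hN).1 h₁
  obtain ⟨k₂, -, rfl⟩ := (mem_orbitPM_intCast hN).1 h₂
  rw [castPM_mkPM_intCast, castPM_mkPM_intCast, mkPM_intCast_eq_mkPM_iff] at heq
  subst hN
  rw [mkPM_intCast_eq_mkPM_iff]
  push_cast at heq ⊢
  have hpcm' : IsCoprime (p : ℤ) (c * m) := by exact_mod_cast Nat.isCoprime_iff_coprime.2 hpcm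
  have hxy : g + k₁ * (c * m) ≡ g + k₂ * (c * m) [ZMOD c * m] := by simp
  refine heq.imp (fun heq => ?_) (fun heq => ?_)
  · exact Int.ModEq.mul_of_isCoprime hpcm' (heq.of_dvd (Dvd.intro m rfl)) hxy
  · refine Int.modEq_neg_of_modEq_of_modEq_neg (Nat.isCoprime_iff_coprime.2 hcm) hpcm' hxy ?_ heq
    exact dvd_add hcg (((Dvd.intro m rfl) : (c : ℤ) ∣ c * m).mul_left _)

lemma unitFiber_eq_biUnion_orbitPM (hp : p.Prime) (hN : p * (c * m) = N) (hm : m ∣ N)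
    (hpm : p * m ∣ N) (hpcm : p.Coprime (c * m)) (g : ℤ) :
    unitFiber hm (mkPM m g) =
      (orbitPM N g p).biUnion fun cl => unitFiber hpm (castPM hpm cl) := by
  ext cl
  simp only [mem_biUnion, unitFiber, mem_filter, mem_univ, true_and]
  constructor
  · rintro ⟨⟨h, rfl, hh⟩, hhg⟩
    rw [castPM_mkPM_intCast] at hhg
    obtain ⟨h', hhh', hh'g⟩ : ∃ h' : ℤ, mkPM N h = mkPM N h' ∧ h' ≡ g [ZMOD m] := by
      rcases mkPM_intCast_eq_mkPM_iff.1 hhg with hhg | hhg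
      · exact ⟨h, rfl, hhg⟩
      · exact ⟨-h, by rw [Int.cast_neg, mkPM_neg], by simpa using hhg.neg⟩
    obtain ⟨k, hk, hh'k⟩ := Int.exists_lt_modEq_add_mul hp hpcm h' g
    refine ⟨mkPM N ((g + k * (c * m : ℕ) : ℤ)), (mem_orbitPM_intCast hN).2 ⟨k, hk, rfl⟩,
      ⟨h, rfl, hh⟩, ?_⟩
    rw [hhh', castPM_mkPM_intCast, castPM_mkPM_intCast, mkPM_intCast_eq_mkPM_iff, Nat.cast_mul]
    refine Or.inl (Int.ModEq.mul_of_isCoprime ?_ hh'k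
      (hh'g.trans (Int.add_mul_modEq_of_dvd (dvd_mul_left m c) g k).symm))
    exact Nat.isCoprime_iff_coprime.2 (Nat.Coprime.coprime_mul_left_right hpcm)
  · rintro ⟨cl', hcl', hunit, hcl⟩
    refine ⟨hunit, ?_⟩
    obtain ⟨k, -, rfl⟩ := (mem_orbitPM_intCast hN).1 hcl'
    rw [← castPM_castPM hpm (dvd_mul_left m p), hcl, castPM_mkPM_intCast, castPM_mkPM_intCast,
      mkPM_intCast_eq_mkPM_iff]
    exact Or.inl (Int.add_mul_modEq_of_dvd (dvd_mul_left m c) g k)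

theorem apply_mkPM_eq_moebius_mul_sum_of_orbit (hp : p.Prime)
    (hN : p * (c * m) = N) (hm : m ∣ N) (hpm : p * m ∣ N) (hcm : c.Coprime m)
    (hpcm : p.Coprime (c * m)) (e : ZModPM N → ℤ) {g : ℤ} (hg : Int.gcd g N = p * c)
    (he : ∑ cl ∈ orbitPM N g p, e cl = 0)
    (ih : ∀ g' : ℤ, Int.gcd g' N = c →
      e (mkPM N g') = μ c * ∑ cl ∈ unitFiber hpm (mkPM (p * m) g'), e cl) :
    e (mkPM N g) = μ (p * c) * ∑ cl ∈ unitFiber hm (mkPM m g), e cl := by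
  have hdg : ((p * c : ℕ) : ℤ) ∣ g := hg ▸ Int.gcd_dvd_left g N
  have hpg : (p : ℤ) ∣ g := (Int.natCast_dvd_natCast.2 (dvd_mul_right p c)).trans hdg
  have hcg : (c : ℤ) ∣ g := (Int.natCast_dvd_natCast.2 (dvd_mul_left c p)).trans hdg
  have hgO : mkPM N g ∈ orbitPM N g p :=
    (mem_orbitPM_intCast hN).2 ⟨0, hp.pos, by simp⟩
  have hfiber : ∀ cl ∈ (orbitPM N g p).erase (mkPM N g),
      e cl = μ c * ∑ cl' ∈ unitFiber hpm (castPM hpm cl), e cl' := by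
    intro cl hcl
    obtain ⟨hclg, hclO⟩ := mem_erase.1 hcl
    obtain ⟨k, hk, rfl⟩ := (mem_orbitPM_intCast hN).1 hclO
    have hpk : ¬ (p : ℤ) ∣ k := by
      rw [Int.natCast_dvd_natCast]
      rintro hpk
      obtain rfl := Nat.eq_zero_of_dvd_of_lt hpk hk
      simp at hclg
    have hgcd : Int.gcd (g + k * (c * m : ℕ)) N = c := by
      have := Int.gcd_add_mul_mul_prime hp hpcm hpg hpk
      rw [hN, hg] at this
      exact Nat.eq_of_mul_eq_mul_right hp.pos (this.trans (mul_comm p c))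
    rw [ih _ hgcd, castPM_mkPM_intCast]
  have hfiber_g : unitFiber hpm (castPM hpm (mkPM N g)) = ∅ := by
    rw [castPM_mkPM_intCast]
    exact unitFiber_mkPM_eq_empty hpm (dvd_mul_right p m) hp.ne_one hpg
  have hμ : μ (p * c) = -μ c := by
    rw [isMultiplicative_moebius.map_mul_of_coprime (Nat.Coprime.coprime_mul_right_right hpcm),
      moebius_apply_prime hp, neg_one_mul]
  calc e (mkPM N g) = -∑ cl ∈ (orbitPM N g p).erase (mkPM N g), e cl := by
        rw [← add_sum_erase _ _ hgO] at he
        linarith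
    _ = -(μ c * ∑ cl ∈ orbitPM N g p, ∑ cl' ∈ unitFiber hpm (castPM hpm cl), e cl') := by
        rw [sum_congr rfl hfiber, ← mul_sum, sum_erase _ (by rw [hfiber_g, sum_empty])]
    _ = μ (p * c) * ∑ cl ∈ unitFiber hm (mkPM m g), e cl := by
        rw [unitFiber_eq_biUnion_orbitPM hp hN hm hpm hpcm, sum_biUnion, hμ, neg_mul]
        exact fun _ h₁ _ h₂ hne =>
          disjoint_unitFiber hpm ((injOn_castPM_orbitPM hN hpm hcm hpcm hcg).ne h₁ h₂ hne)

end OrbitStep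

theorem apply_mkPM_eq_moebius_mul_sum {N : ℕ} [NeZero N] (hsf : Squarefree N) (e : ZModPM N → ℤ)
    (he : ∀ p : ℕ, p.Prime → p ∣ N → ∀ a : ZMod N, ∑ h ∈ orbitPM N a p, e h = 0)
    {d n : ℕ} (hdn : d * n = N) (g : ℤ) (hg : Int.gcd g N = d) :
    e (mkPM N g) = μ d * ∑ cl ∈ unitFiber (Dvd.intro_left d hdn) (mkPM n g), e cl := by
  induction d using Nat.strong_induction_on generalizing n g with
  | _ d ih =>
  rcases eq_or_ne d 1 with rfl | hd1
  · obtain rfl : n = N := by simpa using hdn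
    rw [unitFiber_self hg, sum_singleton, moebius_apply_one, one_mul]
  have hd0 : d ≠ 0 := by rintro rfl; exact NeZero.ne N (by simp [← hdn])
  obtain ⟨p, c, hp, rfl⟩ : ∃ p c, p.Prime ∧ d = p * c :=
    ⟨d.minFac, d / d.minFac, Nat.minFac_prime hd1, (Nat.mul_div_cancel' d.minFac_dvd).symm⟩
  have hN : p * (c * n) = N := by rw [← hdn, mul_assoc]
  obtain ⟨hpcn, -, hsf_cn⟩ := Nat.squarefree_mul_iff.1 (hN ▸ hsf)
  have hcn := (Nat.squarefree_mul_iff.1 hsf_cn).1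
  have hc : c < p * c := lt_mul_left (Nat.pos_of_ne_zero (right_ne_zero_of_mul hd0)) hp.one_lt
  have hcpn : c * (p * n) = N := by rw [← hN]; ring
  exact apply_mkPM_eq_moebius_mul_sum_of_orbit hp hN (Dvd.intro_left _ hdn)
    (Dvd.intro_left _ hcpn) hcn hpcn e hg (he p hp (Dvd.intro _ hN) g)
    fun g' hg' => ih c hc hcpn g' hg'

theorem exponent_relation_squarefree_general (N : ℕ) [NeZero N] (hsf : Squarefree N)
    (e : ZModPM N → ℤ)
    (he : ∀ p : ℕ, p.Prime → p ∣ N → ∀ a : ZMod N, ∑ h ∈ orbitPM N a p, e h = 0) :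
    ∀ g : ℤ, Int.gcd g N < N →
      e (mkPM N (g : ZMod N)) =
        (ArithmeticFunction.moebius (Int.gcd g N)) *
          ∑ cl ∈ Finset.univ.filter (fun cl : ZModPM N =>
              ∃ h : ℤ, mkPM N (h : ZMod N) = cl ∧ Int.gcd h N = 1 ∧
                ((h : ZMod (N / Int.gcd g N)) = (g : ZMod (N / Int.gcd g N)) ∨
                  (h : ZMod (N / Int.gcd g N)) = -(g : ZMod (N / Int.gcd g N)))),
            e cl := by
  intro g _
  have hgN : Int.gcd g N ∣ N := Int.natCast_dvd_natCast.1 (Int.gcd_dvd_right g N)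
  rw [filter_eq_unitFiber (Nat.div_dvd_of_dvd hgN)]
  exact apply_mkPM_eq_moebius_mul_sum hsf e he (Nat.mul_div_cancel' hgN) g rfl

/-- **Exponent relation in the squarefree case.** Let `N` be squarefree with at least two
distinct prime divisors, and let `e : (ℤ/Nℤ)/±1 → ℤ` satisfy the orbit condition
`∑_{h ∈ O_{a,p}} e(h) = 0` for every prime `p | N` and every `a`. Then for every integer
`g` with `d := gcd(g,N) < N`, `e([g]) = μ(d)·∑_{[h]} e([h])`, the sum ranging over the
classes `[h]` with `gcd(h,N) = 1` and `h ≡ ±g (mod N/d)`, each counted once. -/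
theorem exponent_relation_squarefree (N : ℕ) [NeZero N] (hsf : Squarefree N)
    (hN : 2 ≤ N.primeFactors.card)
    (e : ZModPM N → ℤ)
    (he : ∀ p : ℕ, p.Prime → p ∣ N → ∀ a : ZMod N, ∑ h ∈ orbitPM N a p, e h = 0) :
    ∀ g : ℤ, Int.gcd g N < N →
      e (mkPM N (g : ZMod N)) =
        (ArithmeticFunction.moebius (Int.gcd g N)) *
          ∑ cl ∈ Finset.univ.filter (fun cl : ZModPM N =>
              ∃ h : ℤ, mkPM N (h : ZMod N) = cl ∧ Int.gcd h N = 1 ∧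
                ((h : ZMod (N / Int.gcd g N)) = (g : ZMod (N / Int.gcd g N)) ∨
                  (h : ZMod (N / Int.gcd g N)) = -(g : ZMod (N / Int.gcd g N)))),
            e cl :=
  exponent_relation_squarefree_general N hsf e he
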